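/- Let K ⊆ ℝ^d satisfy B(r) ⊆ K ⊆ B(R) with 0 < r ≤ R, let u ∈ B(R), g ∈ ℝ^d with ‖g‖ ≤ G, and set w := u / (1 + S_K(u)), the Gauge projection of u onto K. Define g* := g - 1{⟨g,u⟩ < 0}·⟨g, w⟩·s for any s ∈ ∂γ_K(u) when u ∉ K (and g* := g when u ∈ K). Then w ∈ K, ‖g*‖ ≤ (1 + R/r)·G, and for all x ∈ K: ⟨g, w - x⟩ ≤ ⟨g*, u - x⟩. -/
import Mathlib


open scoped RealInnerProductSpace
open Classical

/-- Polar set of `K`. -/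
def polarSet {d : ℕ} (K : Set (EuclideanSpace ℝ (Fin d))) : Set (EuclideanSpace ℝ (Fin d)) :=
  {x | ∀ y ∈ K, ⟪x, y⟫ ≤ 1}

set_option maxHeartbeats 2000000 in
/-- Key reduction result: the Gauge projection `w = u/(1 + S_K(u))` lies in `K`, the surrogate
subgradient `g* = g - 1{⟨g,u⟩<0}⟨g,w⟩ s` (with `s ∈ ∂γ_K(u)` when `u ∉ K`, `g* = g` otherwise)
satisfies `‖g*‖ ≤ (1 + R/r) G`, and `⟨g, w - x⟩ ≤ ⟨g*, u - x⟩` for all `x ∈ K`. -/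
theorem gauge_projection_reduction {d : ℕ} (r R G : ℝ) (hr : 0 < r) (hrR : r ≤ R)
    (K : Set (EuclideanSpace ℝ (Fin d))) (hconv : Convex ℝ K) (hclosed : IsClosed K)
    (hKr : Metric.closedBall (0 : EuclideanSpace ℝ (Fin d)) r ⊆ K)
    (hKR : K ⊆ Metric.closedBall (0 : EuclideanSpace ℝ (Fin d)) R)
    (u g s : EuclideanSpace ℝ (Fin d)) (hu : ‖u‖ ≤ R) (hg : ‖g‖ ≤ G)
    (hs : u ∉ K → s ∈ polarSet K ∧ ∀ x ∈ polarSet K, ⟪x, u⟫ ≤ ⟪s, u⟫) :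
    let S := max 0 (gauge K u - 1)
    let w := (1 + S)⁻¹ • u
    let gstar := if u ∈ K then g else g - (if ⟪g, u⟫ < 0 then ⟪g, w⟫ else 0) • s
    w ∈ K ∧ ‖gstar‖ ≤ (1 + R / r) * G ∧ ∀ x ∈ K, ⟪g, w - x⟫ ≤ ⟪gstar, u - x⟫ := by
  intro S w gstar
  have hG : 0 ≤ G := le_trans (norm_nonneg g) hg
  have hRr : 0 ≤ R / r := div_nonneg (hr.le.trans hrR) hr.le
  have hK0 : (0 : EuclideanSpace ℝ (Fin d)) ∈ K := hKr (Metric.mem_closedBall_self hr.le)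
  have hnhds : K ∈ nhds (0 : EuclideanSpace ℝ (Fin d)) :=
    Filter.mem_of_superset (Metric.closedBall_mem_nhds 0 hr) hKr
  by_cases hu' : u ∈ K
  · have hS : S = 0 := by
      have h1 := gauge_le_one_of_mem hu'
      simp only [S]
      exact max_eq_left (by linarith)
    have hw : w = u := by simp [w, hS]
    refine ⟨hw ▸ hu', ?_, ?_⟩
    · simp only [gstar, if_pos hu']
      calc ‖g‖ ≤ G := hg
        _ ≤ (1 + R / r) * G := by nlinarith
    · intro x hx
      simp [gstar, if_pos hu', hw]
  · obtain ⟨hspolar, hsmax⟩ := hs hu'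
    have hγ1 : 1 < gauge K u := by
      by_contra h
      push_neg at h
      exact hu' (hclosed.closure_eq ▸ (gauge_le_one_iff_mem_closure hconv hnhds).1 h)
    have hγ0 : 0 < gauge K u := lt_trans one_pos hγ1
    have hS : S = gauge K u - 1 := max_eq_right (by linarith)
    have h1S : 1 + S = gauge K u := by rw [hS]; ring
    have hwdef : w = (gauge K u)⁻¹ • u := by rw [show w = (1 + S)⁻¹ • u from rfl, h1S]
    have hgw : gauge K w = 1 := by
      rw [hwdef, gauge_smul_of_nonneg (inv_nonneg.2 hγ0.le), smul_eq_mul,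
        inv_mul_cancel₀ hγ0.ne']
    have hwK : w ∈ K := by
      rw [← hclosed.closure_eq]
      exact (gauge_le_one_iff_mem_closure hconv hnhds).1 hgw.le
    -- key duality fact : gauge K u ≤ ⟪s, u⟫
    have hkey : gauge K u ≤ ⟪s, u⟫ := by
      by_contra h
      push_neg at h
      obtain ⟨t, ht1, ht2⟩ := exists_between (max_lt h hγ0 : max ⟪s, u⟫ 0 < gauge K u)
      have htpos : 0 < t := lt_of_le_of_lt (le_max_right _ _) ht1
      have hnot : t⁻¹ • u ∉ K := by
        intro hmem
        have h2 := gauge_le_one_of_mem hmem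
        rw [gauge_smul_of_nonneg (inv_nonneg.2 htpos.le), smul_eq_mul] at h2
        nlinarith [mul_inv_cancel₀ htpos.ne', ht2, htpos]
      obtain ⟨f, c, hfK, hfu⟩ := geometric_hahn_banach_closed_point hconv hclosed hnot
      have hc0 : 0 < c := by simpa using hfK 0 hK0
      set v : EuclideanSpace ℝ (Fin d) :=
        c⁻¹ • (InnerProductSpace.toDual ℝ (EuclideanSpace ℝ (Fin d))).symm f with hv
      have hvy : ∀ y, ⟪v, y⟫ = c⁻¹ * f y := fun y => by
        rw [hv, real_inner_smul_left, InnerProductSpace.toDual_symm_apply]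
      have hvpolar : v ∈ polarSet K := by
        intro y hy
        rw [hvy]
        nlinarith [hfK y hy, mul_inv_cancel₀ hc0.ne', inv_pos.2 hc0]
      have hvu : t < ⟪v, u⟫ := by
        have h3 : c < f (t⁻¹ • u) := hfu
        rw [map_smul, smul_eq_mul] at h3
        have h4 : c * t < f u := by
          have h5 := (mul_lt_mul_iff_right₀ htpos).2 h3
          rwa [← mul_assoc, mul_inv_cancel₀ htpos.ne', one_mul, mul_comm t c] at h5
        rw [hvy]
        have h6 := (mul_lt_mul_iff_right₀ (inv_pos.2 hc0)).2 h4
        rwa [← mul_assoc, inv_mul_cancel₀ hc0.ne', one_mul] at h6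
      have := hsmax v hvpolar
      have h7 : ⟪s, u⟫ ≤ ⟪s, u⟫ ⊔ 0 := le_max_left _ _
      linarith
    -- norm bound on s
    have hsnorm : ‖s‖ ≤ r⁻¹ := by
      rcases eq_or_ne s 0 with h | h
      · rw [h, norm_zero]; positivity
      · have hs0 : 0 < ‖s‖ := norm_pos_iff.2 h
        have hmem : (r * ‖s‖⁻¹) • s ∈ K := by
          apply hKr
          rw [Metric.mem_closedBall, dist_zero_right, norm_smul, Real.norm_eq_abs,
            abs_of_nonneg (by positivity)]
          rw [mul_assoc, inv_mul_cancel₀ hs0.ne', mul_one]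
        have h5 := hspolar _ hmem
        rw [real_inner_smul_right, real_inner_self_eq_norm_sq] at h5
        have h6 : r * ‖s‖ ≤ 1 := by
          have : ‖s‖⁻¹ * ‖s‖ ^ 2 = ‖s‖ := by field_simp
          nlinarith
        nlinarith [inv_pos.2 hr, mul_inv_cancel₀ hr.ne']
    -- simplify gstar
    have hgstar : gstar = g - (if ⟪g, u⟫ < 0 then ⟪g, w⟫ else 0) • s := if_neg hu'
    have hwnorm : ‖w‖ ≤ R := by
      rw [hwdef, norm_smul, Real.norm_eq_abs, abs_of_nonneg (inv_nonneg.2 hγ0.le)]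
      have : (gauge K u)⁻¹ ≤ 1 := by
        nlinarith [inv_pos.2 hγ0, inv_mul_cancel₀ hγ0.ne']
      nlinarith [norm_nonneg u]
    have hgwle : |⟪g, w⟫| ≤ G * R := by
      calc |⟪g, w⟫| ≤ ‖g‖ * ‖w‖ := abs_real_inner_le_norm g w
        _ ≤ G * R := by nlinarith [norm_nonneg g, norm_nonneg w]
    refine ⟨hwK, ?_, ?_⟩
    · rw [hgstar]
      obtain ⟨cc, hcc⟩ : ∃ cc : ℝ, (if ⟪g, u⟫ < 0 then ⟪g, w⟫ else 0) = cc := ⟨_, rfl⟩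
      rw [hcc]
      have hcabs : |cc| ≤ G * R := by
        rw [← hcc]
        split
        · exact hgwle
        · simpa using mul_nonneg hG (hr.le.trans hrR)
      have h7 : ‖g - cc • s‖ ≤ ‖g‖ + |cc| * ‖s‖ := by
        refine (norm_sub_le _ _).trans ?_
        rw [norm_smul, Real.norm_eq_abs]
      have h8 : |cc| * ‖s‖ ≤ G * R * r⁻¹ :=
        mul_le_mul hcabs hsnorm (norm_nonneg s) (mul_nonneg hG (hr.le.trans hrR))
      have h9 : (1 + R / r) * G = G + G * R * r⁻¹ := by
        field_simp
      rw [h9]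
      linarith
    · intro x hx
      rw [hgstar, inner_sub_right, inner_sub_left, inner_sub_right, real_inner_smul_left,
        inner_sub_right]
      have hgwin : ⟪g, w⟫ = (gauge K u)⁻¹ * ⟪g, u⟫ := by
        rw [hwdef, real_inner_smul_right]
      have hsx : ⟪s, x⟫ ≤ 1 := hspolar x hx
      have hγinv : (gauge K u)⁻¹ * gauge K u = 1 := inv_mul_cancel₀ hγ0.ne'
      set γ := gauge K u
      set A := ⟪g, u⟫
      by_cases hA : A < 0
      · rw [if_pos hA, hgwin]
        have hm : γ⁻¹ * A ≤ 0 := (mul_neg_of_pos_of_neg (inv_pos.2 hγ0) hA).le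
        have hAγ : γ⁻¹ * A * γ = A := by
          rw [mul_comm γ⁻¹ A, mul_assoc, inv_mul_cancel₀ hγ0.ne', mul_one]
        have e1 : γ⁻¹ * A * (⟪s, u⟫ - γ) ≤ 0 :=
          mul_nonpos_of_nonpos_of_nonneg hm (by linarith)
        have e2 : 0 ≤ γ⁻¹ * A * (⟪s, x⟫ - 1) := by nlinarith
        nlinarith [e1, e2, hAγ]
      · rw [if_neg hA]
        push_neg at hA
        rw [hgwin]
        have hγle : γ⁻¹ ≤ 1 := by nlinarith [inv_pos.2 hγ0, inv_mul_cancel₀ hγ0.ne']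
        nlinarith [mul_nonneg (sub_nonneg.2 hγle) hA]
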